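/- arXiv:2305.01674 — 2 statements merged into one kernel-verified Lean document; each statement's English description precedes it below -/
import Mathlib

section
/- Let U and V be unitary n×n complex matrices and let ω = (1/√n) · vec(I) be the normalized maximally entangled vector in ℂ^n ⊗ ℂ^n ≃ ℂ^(n×n). Then ((U·V†) ⊗ I) ω ω* ((U·V†) ⊗ I)† = ω ω* if and only if there exists φ ∈ ℝ with U = e^{iφ} V. -/
open Matrix Kronecker

def vec {n : ℕ} (M : Matrix (Fin n) (Fin n) ℂ) : Fin n × Fin n → ℂ :=
  fun p => M p.1 p.2

noncomputable def omegaVec (n : ℕ) : Fin n × Fin n → ℂ :=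
  fun p => (1 / Real.sqrt n : ℂ) * _root_.vec (1 : Matrix (Fin n) (Fin n) ℂ) p

/-!
Writing `W = U V†`, the vector `(W ⊗ I) ω` is `vec W / √n`. Two vectors have the same projector
`x x*` exactly when they differ by a phase, so the hypothesis says `vec W = c • vec I` with
`|c| = 1`, i.e. `U V† = c I`, i.e. `U = c V`.
-/

theorem vecMulVec_self_star_eq_iff {ι 𝕜 : Type*} [RCLike 𝕜] {x y : ι → 𝕜} :
    vecMulVec x (star x) = vecMulVec y (star y) ↔ ∃ c : 𝕜, ‖c‖ = 1 ∧ x = c • y := by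
  constructor
  · intro h
    have hxy : ∀ i j, x i * star (x j) = y i * star (y j) := fun i j => by
      simpa only [vecMulVec_apply, Pi.star_apply] using congrFun₂ h i j
    by_cases hy : y = 0
    · refine ⟨1, norm_one, ?_⟩
      rw [one_smul, hy]
      funext i
      have : x i * star (x i) = 0 := by simpa [hy] using hxy i i
      simpa [RCLike.star_def, RCLike.mul_conj] using this
    obtain ⟨k, hk⟩ := Function.ne_iff.mp hy
    have hkk := hxy k k
    have hnorm : ‖x k‖ = ‖y k‖ := by
      simp only [RCLike.star_def, RCLike.mul_conj] at hkk
      exact (sq_eq_sq₀ (norm_nonneg _) (norm_nonneg _)).mp (by exact_mod_cast hkk)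
    refine ⟨x k / y k, by rw [norm_div, hnorm, div_self (norm_ne_zero_iff.mpr hk)], ?_⟩
    funext i
    rw [Pi.smul_apply, smul_eq_mul, div_mul_eq_mul_div, eq_div_iff hk]
    apply mul_right_cancel₀ (star_ne_zero.mpr hk)
    linear_combination (-x i) * hkk + x k * hxy i k
  · rintro ⟨c, hc, rfl⟩
    ext i j
    have hcc : c * star c = 1 := by simp [RCLike.star_def, RCLike.mul_conj, hc]
    simp only [vecMulVec_apply, Pi.star_apply, Pi.smul_apply, smul_eq_mul, star_mul']
    linear_combination y i * star (y j) * hcc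

theorem kronecker_one_mulVec_vec {n : ℕ} (W X : Matrix (Fin n) (Fin n) ℂ) :
    (W ⊗ₖ (1 : Matrix (Fin n) (Fin n) ℂ)) *ᵥ _root_.vec X = _root_.vec (W * X) := by
  change (W ⊗ₖ 1) *ᵥ Matrix.vec Xᵀ = Matrix.vec (W * X)ᵀ
  rw [kronecker_mulVec_vec, Matrix.one_mul, transpose_mul]

theorem kronecker_one_mulVec_omegaVec_eq_smul_iff {n : ℕ} (W : Matrix (Fin n) (Fin n) ℂ) (c : ℂ) :
    (W ⊗ₖ (1 : Matrix (Fin n) (Fin n) ℂ)) *ᵥ omegaVec n = c • omegaVec n ↔ W = c • 1 := by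
  rcases Nat.eq_zero_or_pos n with rfl | hn
  · exact iff_of_true (funext fun p => p.1.elim0) (Subsingleton.elim _ _)
  have hs : (1 / Real.sqrt n : ℂ) ≠ 0 := by
    have : Real.sqrt n ≠ 0 := (Real.sqrt_pos.mpr (by exact_mod_cast hn)).ne'
    simpa using this
  have homega : omegaVec n = (1 / Real.sqrt n : ℂ) • _root_.vec 1 := rfl
  have hvec : c • _root_.vec (1 : Matrix (Fin n) (Fin n) ℂ) = _root_.vec (c • 1) := rfl
  rw [homega, mulVec_smul, kronecker_one_mulVec_vec, Matrix.mul_one, smul_comm c, hvec,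
    smul_right_injective _ hs |>.eq_iff]
  exact ⟨fun h => Matrix.ext fun i j => congrFun h (i, j), congrArg _⟩

theorem mul_conjTranspose_eq_smul_one_iff {n R : Type*} [Fintype n] [DecidableEq n] [CommRing R]
    [StarRing R] {U V : Matrix n n R} (hV : V ∈ unitaryGroup n R) (c : R) :
    U * Vᴴ = c • 1 ↔ U = c • V := by
  have hVhV : Vᴴ * V = 1 := mem_unitaryGroup_iff'.mp hV
  have hVVh : V * Vᴴ = 1 := mem_unitaryGroup_iff.mp hV
  constructor
  · intro h
    rw [← Matrix.mul_one U, ← hVhV, ← Matrix.mul_assoc, h, Matrix.smul_mul,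
      Matrix.one_mul]
  · rintro rfl
    rw [Matrix.smul_mul, hVVh]

theorem entanglement_assisted_equivalence_general (n : ℕ) (U V : Matrix (Fin n) (Fin n) ℂ)
    (hV : V ∈ Matrix.unitaryGroup (Fin n) ℂ) :
    (∀ i j : Fin n × Fin n,
        ((U * Vᴴ) ⊗ₖ (1 : Matrix (Fin n) (Fin n) ℂ)).mulVec (omegaVec n) i *
          (starRingEnd ℂ) (((U * Vᴴ) ⊗ₖ (1 : Matrix (Fin n) (Fin n) ℂ)).mulVec (omegaVec n) j) =
        omegaVec n i * (starRingEnd ℂ) (omegaVec n j)) ↔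
      ∃ φ : ℝ, U = Complex.exp (φ * Complex.I) • V := by
  have hprojector : ∀ x y : Fin n × Fin n → ℂ,
      (∀ i j, x i * starRingEnd ℂ (x j) = y i * starRingEnd ℂ (y j)) ↔
        vecMulVec x (star x) = vecMulVec y (star y) := fun x y => by
    simp only [← Matrix.ext_iff, vecMulVec_apply, Pi.star_apply, starRingEnd_apply]
  simp_rw [hprojector, vecMulVec_self_star_eq_iff, kronecker_one_mulVec_omegaVec_eq_smul_iff,
    mul_conjTranspose_eq_smul_one_iff hV]
  constructor
  · rintro ⟨c, hc, rfl⟩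
    obtain ⟨φ, rfl⟩ := (Complex.norm_eq_one_iff c).mp hc
    exact ⟨φ, rfl⟩
  · rintro ⟨φ, rfl⟩
    exact ⟨_, Complex.norm_exp_ofReal_mul_I φ, rfl⟩

theorem entanglement_assisted_equivalence (n : ℕ) (U V : Matrix (Fin n) (Fin n) ℂ)
    (hU : U ∈ Matrix.unitaryGroup (Fin n) ℂ) (hV : V ∈ Matrix.unitaryGroup (Fin n) ℂ) :
    (∀ i j : Fin n × Fin n,
        ((U * Vᴴ) ⊗ₖ (1 : Matrix (Fin n) (Fin n) ℂ)).mulVec (omegaVec n) i *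
          (starRingEnd ℂ) (((U * Vᴴ) ⊗ₖ (1 : Matrix (Fin n) (Fin n) ℂ)).mulVec (omegaVec n) j) =
        omegaVec n i * (starRingEnd ℂ) (omegaVec n j)) ↔
      ∃ φ : ℝ, U = Complex.exp (φ * Complex.I) • V :=
  entanglement_assisted_equivalence_general n U V hV
end

section
/- For unitary matrices U, V of the same size, U·V† = e^{iφ}·I for some real φ if and only if for every vector ψ there exists a phase (possibly depending on ψ only through a single global φ) such that U ψ = e^{iφ} V ψ; equivalently, (∃ φ, ∀ ψ, U ψ = e^{iφ} • (V ψ)) ↔ (∃ φ, U = e^{iφ} • V). -/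
open Matrix

theorem global_phase_equivalence (n : ℕ) (hn : 1 ≤ n)
    (U V : Matrix (Fin n) (Fin n) ℂ)
    (hU : U ∈ Matrix.unitaryGroup (Fin n) ℂ) (hV : V ∈ Matrix.unitaryGroup (Fin n) ℂ) :
    ((∃ φ : ℝ, ∀ ψ : Fin n → ℂ,
        U.mulVec ψ = Complex.exp (φ * Complex.I) • V.mulVec ψ) ↔
      (∃ φ : ℝ, U = Complex.exp (φ * Complex.I) • V)) ∧
    ((∀ ψ : Fin n → ℂ, ∃ φ : ℝ,
        U.mulVec ψ = Complex.exp (φ * Complex.I) • V.mulVec ψ) →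
      ∃ φ : ℝ, U = Complex.exp (φ * Complex.I) • V) := by
  have hVinv : star V * V = 1 := hV.1
  -- cancel V: for any x, (star V) *ᵥ (V *ᵥ x) = x
  have hcancel : ∀ x : Fin n → ℂ, (star V).mulVec (V.mulVec x) = x := by
    intro x
    rw [Matrix.mulVec_mulVec, hVinv, Matrix.one_mulVec]
  -- key: from pointwise hypothesis, deduce global equality
  have key : (∀ ψ : Fin n → ℂ, ∃ φ : ℝ,
        U.mulVec ψ = Complex.exp (φ * Complex.I) • V.mulVec ψ) →
      ∃ φ : ℝ, U = Complex.exp (φ * Complex.I) • V := by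
    intro h
    choose φ hφ using h
    set e : Fin n → (Fin n → ℂ) := fun j => Pi.single j 1 with he
    have z : Fin n := ⟨0, hn⟩
    refine ⟨φ (e z), ?_⟩
    -- all phases on basis vectors agree with the phase at z
    have hsame : ∀ j : Fin n, Complex.exp (φ (e j) * Complex.I)
        = Complex.exp (φ (e z) * Complex.I) := by
      intro j
      by_cases hj : j = z
      · rw [hj]
      · have h1 := hφ (e z)
        have h2 := hφ (e j)
        have h3 := hφ (e z + e j)
        rw [Matrix.mulVec_add, Matrix.mulVec_add, h1, h2, smul_add] at h3
        -- rearrange: (c1 - c)•V e z + (c2 - c)•V e j = 0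
        set c1 := Complex.exp (φ (e z) * Complex.I)
        set c2 := Complex.exp (φ (e j) * Complex.I)
        set c := Complex.exp (φ (e z + e j) * Complex.I)
        have h4 : (c1 - c) • V.mulVec (e z) + (c2 - c) • V.mulVec (e j) = 0 := by
          calc (c1 - c) • V.mulVec (e z) + (c2 - c) • V.mulVec (e j)
              = (c1 • V.mulVec (e z) + c2 • V.mulVec (e j))
                - (c • V.mulVec (e z) + c • V.mulVec (e j)) := by
                rw [sub_smul, sub_smul]; abel
            _ = 0 := by rw [h3]; simp
        have h5 : (c1 - c) • (e z) + (c2 - c) • (e j) = 0 := by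
          have := congrArg (star V).mulVec h4
          rwa [Matrix.mulVec_add, Matrix.mulVec_smul, Matrix.mulVec_smul,
            hcancel, hcancel, Matrix.mulVec_zero] at this
        have hz : c1 - c = 0 := by
          have := congrFun h5 z
          simpa [he, Pi.single_apply, hj, Ne.symm hj] using this
        have hjj : c2 - c = 0 := by
          have := congrFun h5 j
          simpa [he, Pi.single_apply, hj] using this
        rw [sub_eq_zero] at hz hjj
        exact hjj.trans hz.symm
    -- conclude matrix equality column by column
    ext i j
    have h1 := hφ (e j)
    have h2 := congrFun h1 i
    rw [hsame j] at h2
    simpa [he, Matrix.mulVec_single] using h2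
  refine ⟨⟨?_, ?_⟩, key⟩
  · rintro ⟨φ, h⟩
    exact key fun ψ => ⟨φ, h ψ⟩
  · rintro ⟨φ, h⟩
    exact ⟨φ, fun ψ => by rw [h, Matrix.smul_mulVec]⟩
end
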